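/- Let p_1,...,p_9 be the nine polynomials in C[x_1,x_2,x_3,x_4,x_5] defined in the context. If (a_1,a_2,a_3,a_4,a_5) is a tuple of nonnegative integers with p_i(a_1,...,a_5) = 0 for all i = 1,...,9, then either a_2 = a_3 = a_4 = a_5 = 0 or a_1 = a_2 = a_3 = a_4 = 0; conversely, every tuple of either of these two forms is a common zero of p_1,...,p_9. -/
import Mathlib


open MvPolynomial

noncomputable def p1 : MvPolynomial (Fin 5) ℂ :=
    X 0 * X 2 *
      (65 + 10 * X 0 + 12 * X 1 - 8 * X 0 * X 1 - 8 * X 1 ^ 2 + 66 * X 2 + 4 * X 0 * X 2 + 8 * X 1 * X 2 + 16 * X 2 ^ 2 + 112 * X 3 + 16 * X 0 * X 3 + 32 * X 1 * X 3 + 48 * X 2 * X 3 + 32 * X 3 ^ 2 + 40 * X 4 + 8 * X 0 * X 4 + 16 * X 1 * X 4 + 24 * X 2 * X 4 + 32 * X 3 * X 4)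

noncomputable def p2 : MvPolynomial (Fin 5) ℂ :=
    X 0 * X 3 *
      (45 + 10 * X 0 + 28 * X 1 + 8 * X 0 * X 1 + 8 * X 1 ^ 2 + 84 * X 2 + 16 * X 0 * X 2 + 32 * X 1 * X 2 + 24 * X 2 ^ 2 + 38 * X 3 + 4 * X 0 * X 3 + 8 * X 1 * X 3 + 32 * X 2 * X 3 + 8 * X 3 ^ 2 - 8 * X 0 * X 4 - 16 * X 1 * X 4 + 16 * X 2 * X 4 + 8 * X 3 * X 4)

noncomputable def p3 : MvPolynomial (Fin 5) ℂ :=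
    X 0 * X 4 *
      (75 + 30 * X 0 + 68 * X 1 + 8 * X 0 * X 1 + 8 * X 1 ^ 2 + 84 * X 2 + 16 * X 0 * X 2 + 32 * X 1 * X 2 + 24 * X 2 ^ 2 + 68 * X 3 + 24 * X 0 * X 3 + 48 * X 1 * X 3 + 32 * X 2 * X 3 + 8 * X 3 ^ 2 + 30 * X 4 + 12 * X 0 * X 4 + 24 * X 1 * X 4 + 16 * X 2 * X 4 + 8 * X 3 * X 4)

noncomputable def p4 : MvPolynomial (Fin 5) ℂ :=
    X 1 * X 3 *
      (75 + 40 * X 0 + 58 * X 1 + 8 * X 0 * X 1 + 8 * X 1 ^ 2 + 84 * X 2 + 16 * X 0 * X 2 + 32 * X 1 * X 2 + 24 * X 2 ^ 2 + 58 * X 3 + 24 * X 0 * X 3 + 28 * X 1 * X 3 + 32 * X 2 * X 3 + 8 * X 3 ^ 2 + 40 * X 4 + 32 * X 0 * X 4 + 24 * X 1 * X 4 + 16 * X 2 * X 4 + 8 * X 3 * X 4)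

noncomputable def p5 : MvPolynomial (Fin 5) ℂ :=
    X 1 * X 4 *
      (45 + 38 * X 1 + 8 * X 0 * X 1 + 8 * X 1 ^ 2 + 84 * X 2 + 16 * X 0 * X 2 + 32 * X 1 * X 2 + 24 * X 2 ^ 2 + 28 * X 3 - 16 * X 0 * X 3 + 8 * X 1 * X 3 + 32 * X 2 * X 3 + 8 * X 3 ^ 2 + 10 * X 4 - 8 * X 0 * X 4 + 4 * X 1 * X 4 + 16 * X 2 * X 4 + 8 * X 3 * X 4)

noncomputable def p6 : MvPolynomial (Fin 5) ℂ :=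
    X 2 * X 4 *
      (65 + 40 * X 0 + 112 * X 1 + 32 * X 0 * X 1 + 32 * X 1 ^ 2 + 66 * X 2 + 24 * X 0 * X 2 + 48 * X 1 * X 2 + 16 * X 2 ^ 2 + 12 * X 3 + 16 * X 0 * X 3 + 32 * X 1 * X 3 + 8 * X 2 * X 3 - 8 * X 3 ^ 2 + 10 * X 4 + 8 * X 0 * X 4 + 16 * X 1 * X 4 + 4 * X 2 * X 4 - 8 * X 3 * X 4)

noncomputable def p7 : MvPolynomial (Fin 5) ℂ :=
    X 1 * (C (7/2 : ℂ) + X 0 + X 1 + X 2 + X 3 + X 4) *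
      (15 + 15 * X 0 + 21 * X 1 + 6 * X 0 * X 1 + 6 * X 1 ^ 2 + 23 * X 2 + 12 * X 0 * X 2 + 14 * X 1 * X 2 + 8 * X 2 ^ 2 + X 3 + 8 * X 0 * X 3 + 6 * X 1 * X 3 + 4 * X 2 * X 3 - 4 * X 3 ^ 2 - 5 * X 4 + 4 * X 0 * X 4 - 2 * X 1 * X 4 - 8 * X 2 * X 4 - 4 * X 3 * X 4)

noncomputable def p8 : MvPolynomial (Fin 5) ℂ :=
    X 2 * (C (7/2 : ℂ) + X 0 + X 1 + X 2 + X 3 + X 4) *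
      (5 - 5 * X 0 + 9 * X 1 + 4 * X 0 * X 1 + 4 * X 1 ^ 2 + 7 * X 2 - 2 * X 0 * X 2 + 6 * X 1 * X 2 + 2 * X 2 ^ 2 + 9 * X 3 - 8 * X 0 * X 3 + 4 * X 1 * X 3 + 6 * X 2 * X 3 + 4 * X 3 ^ 2 - 5 * X 4 - 4 * X 0 * X 4 - 8 * X 1 * X 4 - 2 * X 2 * X 4 + 4 * X 3 * X 4)

noncomputable def p9 : MvPolynomial (Fin 5) ℂ :=
    X 3 * (C (7/2 : ℂ) + X 0 + X 1 + X 2 + X 3 + X 4) *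
      (15 - 5 * X 0 + X 1 - 4 * X 0 * X 1 - 4 * X 1 ^ 2 + 23 * X 2 - 8 * X 0 * X 2 + 4 * X 1 * X 2 + 8 * X 2 ^ 2 + 21 * X 3 - 2 * X 0 * X 3 + 6 * X 1 * X 3 + 14 * X 2 * X 3 + 6 * X 3 ^ 2 + 15 * X 4 + 4 * X 0 * X 4 + 8 * X 1 * X 4 + 12 * X 2 * X 4 + 6 * X 3 * X 4)

noncomputable def p : Fin 9 → MvPolynomial (Fin 5) ℂ := ![p1, p2, p3, p4, p5, p6, p7, p8, p9]



private lemma pos_of_ne (n : ℕ) (h : n ≠ 0) : (0:ℝ) < (n:ℝ) := by exact_mod_cast Nat.pos_of_ne_zero h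

private lemma castRz (n : ℕ) (h : n = 0) : ((n:ℕ):ℝ) = 0 := by rw [h]; norm_num

set_option maxHeartbeats 2000000 in
theorem KL_classification_sl6 (a : Fin 5 → ℕ) :
    (∀ i : Fin 9, MvPolynomial.eval (fun j => (a j : ℂ)) (p i) = 0) ↔
      ((a 1 = 0 ∧ a 2 = 0 ∧ a 3 = 0 ∧ a 4 = 0) ∨
        (a 0 = 0 ∧ a 1 = 0 ∧ a 2 = 0 ∧ a 3 = 0)) := by
  constructor
  · intro h

    have e1 := h 0
    rw [show p 0 = p1 from rfl] at e1
    simp only [p1, map_mul, map_add, map_sub, map_ofNat, eval_X, eval_C, map_pow, map_one] at e1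
    have E1 : (a 0 : ℝ) * (a 2 : ℝ) * (65 + 10 * (a 0 : ℝ) + 12 * (a 1 : ℝ) - 8 * (a 0 : ℝ) * (a 1 : ℝ) - 8 * (a 1 : ℝ) ^ 2 + 66 * (a 2 : ℝ) + 4 * (a 0 : ℝ) * (a 2 : ℝ) + 8 * (a 1 : ℝ) * (a 2 : ℝ) + 16 * (a 2 : ℝ) ^ 2 + 112 * (a 3 : ℝ) + 16 * (a 0 : ℝ) * (a 3 : ℝ) + 32 * (a 1 : ℝ) * (a 3 : ℝ) + 48 * (a 2 : ℝ) * (a 3 : ℝ) + 32 * (a 3 : ℝ) ^ 2 + 40 * (a 4 : ℝ) + 8 * (a 0 : ℝ) * (a 4 : ℝ) + 16 * (a 1 : ℝ) * (a 4 : ℝ) + 24 * (a 2 : ℝ) * (a 4 : ℝ) + 32 * (a 3 : ℝ) * (a 4 : ℝ)) = 0 := by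
      apply Complex.ofReal_eq_zero.mp
      rw [← e1]; push_cast; ring
    clear e1
    have e2 := h 1
    rw [show p 1 = p2 from rfl] at e2
    simp only [p2, map_mul, map_add, map_sub, map_ofNat, eval_X, eval_C, map_pow, map_one] at e2
    have E2 : (a 0 : ℝ) * (a 3 : ℝ) * (45 + 10 * (a 0 : ℝ) + 28 * (a 1 : ℝ) + 8 * (a 0 : ℝ) * (a 1 : ℝ) + 8 * (a 1 : ℝ) ^ 2 + 84 * (a 2 : ℝ) + 16 * (a 0 : ℝ) * (a 2 : ℝ) + 32 * (a 1 : ℝ) * (a 2 : ℝ) + 24 * (a 2 : ℝ) ^ 2 + 38 * (a 3 : ℝ) + 4 * (a 0 : ℝ) * (a 3 : ℝ) + 8 * (a 1 : ℝ) * (a 3 : ℝ) + 32 * (a 2 : ℝ) * (a 3 : ℝ) + 8 * (a 3 : ℝ) ^ 2 - 8 * (a 0 : ℝ) * (a 4 : ℝ) - 16 * (a 1 : ℝ) * (a 4 : ℝ) + 16 * (a 2 : ℝ) * (a 4 : ℝ) + 8 * (a 3 : ℝ) * (a 4 : ℝ)) = 0 := by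
      apply Complex.ofReal_eq_zero.mp
      rw [← e2]; push_cast; ring
    clear e2
    have e3 := h 2
    rw [show p 2 = p3 from rfl] at e3
    simp only [p3, map_mul, map_add, map_sub, map_ofNat, eval_X, eval_C, map_pow, map_one] at e3
    have E3 : (a 0 : ℝ) * (a 4 : ℝ) * (75 + 30 * (a 0 : ℝ) + 68 * (a 1 : ℝ) + 8 * (a 0 : ℝ) * (a 1 : ℝ) + 8 * (a 1 : ℝ) ^ 2 + 84 * (a 2 : ℝ) + 16 * (a 0 : ℝ) * (a 2 : ℝ) + 32 * (a 1 : ℝ) * (a 2 : ℝ) + 24 * (a 2 : ℝ) ^ 2 + 68 * (a 3 : ℝ) + 24 * (a 0 : ℝ) * (a 3 : ℝ) + 48 * (a 1 : ℝ) * (a 3 : ℝ) + 32 * (a 2 : ℝ) * (a 3 : ℝ) + 8 * (a 3 : ℝ) ^ 2 + 30 * (a 4 : ℝ) + 12 * (a 0 : ℝ) * (a 4 : ℝ) + 24 * (a 1 : ℝ) * (a 4 : ℝ) + 16 * (a 2 : ℝ) * (a 4 : ℝ) + 8 * (a 3 : ℝ) * (a 4 : ℝ)) = 0 := by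
      apply Complex.ofReal_eq_zero.mp
      rw [← e3]; push_cast; ring
    clear e3
    have e4 := h 3
    rw [show p 3 = p4 from rfl] at e4
    simp only [p4, map_mul, map_add, map_sub, map_ofNat, eval_X, eval_C, map_pow, map_one] at e4
    have E4 : (a 1 : ℝ) * (a 3 : ℝ) * (75 + 40 * (a 0 : ℝ) + 58 * (a 1 : ℝ) + 8 * (a 0 : ℝ) * (a 1 : ℝ) + 8 * (a 1 : ℝ) ^ 2 + 84 * (a 2 : ℝ) + 16 * (a 0 : ℝ) * (a 2 : ℝ) + 32 * (a 1 : ℝ) * (a 2 : ℝ) + 24 * (a 2 : ℝ) ^ 2 + 58 * (a 3 : ℝ) + 24 * (a 0 : ℝ) * (a 3 : ℝ) + 28 * (a 1 : ℝ) * (a 3 : ℝ) + 32 * (a 2 : ℝ) * (a 3 : ℝ) + 8 * (a 3 : ℝ) ^ 2 + 40 * (a 4 : ℝ) + 32 * (a 0 : ℝ) * (a 4 : ℝ) + 24 * (a 1 : ℝ) * (a 4 : ℝ) + 16 * (a 2 : ℝ) * (a 4 : ℝ) + 8 * (a 3 : ℝ) * (a 4 : ℝ)) = 0 := by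
      apply Complex.ofReal_eq_zero.mp
      rw [← e4]; push_cast; ring
    clear e4
    have e5 := h 4
    rw [show p 4 = p5 from rfl] at e5
    simp only [p5, map_mul, map_add, map_sub, map_ofNat, eval_X, eval_C, map_pow, map_one] at e5
    have E5 : (a 1 : ℝ) * (a 4 : ℝ) * (45 + 38 * (a 1 : ℝ) + 8 * (a 0 : ℝ) * (a 1 : ℝ) + 8 * (a 1 : ℝ) ^ 2 + 84 * (a 2 : ℝ) + 16 * (a 0 : ℝ) * (a 2 : ℝ) + 32 * (a 1 : ℝ) * (a 2 : ℝ) + 24 * (a 2 : ℝ) ^ 2 + 28 * (a 3 : ℝ) - 16 * (a 0 : ℝ) * (a 3 : ℝ) + 8 * (a 1 : ℝ) * (a 3 : ℝ) + 32 * (a 2 : ℝ) * (a 3 : ℝ) + 8 * (a 3 : ℝ) ^ 2 + 10 * (a 4 : ℝ) - 8 * (a 0 : ℝ) * (a 4 : ℝ) + 4 * (a 1 : ℝ) * (a 4 : ℝ) + 16 * (a 2 : ℝ) * (a 4 : ℝ) + 8 * (a 3 : ℝ) * (a 4 : ℝ)) = 0 := by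
      apply Complex.ofReal_eq_zero.mp
      rw [← e5]; push_cast; ring
    clear e5
    have e6 := h 5
    rw [show p 5 = p6 from rfl] at e6
    simp only [p6, map_mul, map_add, map_sub, map_ofNat, eval_X, eval_C, map_pow, map_one] at e6
    have E6 : (a 2 : ℝ) * (a 4 : ℝ) * (65 + 40 * (a 0 : ℝ) + 112 * (a 1 : ℝ) + 32 * (a 0 : ℝ) * (a 1 : ℝ) + 32 * (a 1 : ℝ) ^ 2 + 66 * (a 2 : ℝ) + 24 * (a 0 : ℝ) * (a 2 : ℝ) + 48 * (a 1 : ℝ) * (a 2 : ℝ) + 16 * (a 2 : ℝ) ^ 2 + 12 * (a 3 : ℝ) + 16 * (a 0 : ℝ) * (a 3 : ℝ) + 32 * (a 1 : ℝ) * (a 3 : ℝ) + 8 * (a 2 : ℝ) * (a 3 : ℝ) - 8 * (a 3 : ℝ) ^ 2 + 10 * (a 4 : ℝ) + 8 * (a 0 : ℝ) * (a 4 : ℝ) + 16 * (a 1 : ℝ) * (a 4 : ℝ) + 4 * (a 2 : ℝ) * (a 4 : ℝ) - 8 * (a 3 : ℝ) * (a 4 : ℝ)) = 0 := by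
      apply Complex.ofReal_eq_zero.mp
      rw [← e6]; push_cast; ring
    clear e6
    have e7 := h 6
    rw [show p 6 = p7 from rfl] at e7
    simp only [p7, map_mul, map_add, map_sub, map_ofNat, eval_X, eval_C, map_pow, map_one] at e7
    have E7 : (a 1 : ℝ) * ((7/2 : ℝ) + (a 0 : ℝ) + (a 1 : ℝ) + (a 2 : ℝ) + (a 3 : ℝ) + (a 4 : ℝ)) * (15 + 15 * (a 0 : ℝ) + 21 * (a 1 : ℝ) + 6 * (a 0 : ℝ) * (a 1 : ℝ) + 6 * (a 1 : ℝ) ^ 2 + 23 * (a 2 : ℝ) + 12 * (a 0 : ℝ) * (a 2 : ℝ) + 14 * (a 1 : ℝ) * (a 2 : ℝ) + 8 * (a 2 : ℝ) ^ 2 + (a 3 : ℝ) + 8 * (a 0 : ℝ) * (a 3 : ℝ) + 6 * (a 1 : ℝ) * (a 3 : ℝ) + 4 * (a 2 : ℝ) * (a 3 : ℝ) - 4 * (a 3 : ℝ) ^ 2 - 5 * (a 4 : ℝ) + 4 * (a 0 : ℝ) * (a 4 : ℝ) - 2 * (a 1 : ℝ) * (a 4 : ℝ) - 8 * (a 2 :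 ℝ) * (a 4 : ℝ) - 4 * (a 3 : ℝ) * (a 4 : ℝ)) = 0 := by
      apply Complex.ofReal_eq_zero.mp
      rw [← e7]; push_cast; ring
    clear e7
    have e8 := h 7
    rw [show p 7 = p8 from rfl] at e8
    simp only [p8, map_mul, map_add, map_sub, map_ofNat, eval_X, eval_C, map_pow, map_one] at e8
    have E8 : (a 2 : ℝ) * ((7/2 : ℝ) + (a 0 : ℝ) + (a 1 : ℝ) + (a 2 : ℝ) + (a 3 : ℝ) + (a 4 : ℝ)) * (5 - 5 * (a 0 : ℝ) + 9 * (a 1 : ℝ) + 4 * (a 0 : ℝ) * (a 1 : ℝ) + 4 * (a 1 : ℝ) ^ 2 + 7 * (a 2 : ℝ) - 2 * (a 0 : ℝ) * (a 2 : ℝ) + 6 * (a 1 : ℝ) * (a 2 : ℝ) + 2 * (a 2 : ℝ) ^ 2 + 9 * (a 3 : ℝ) - 8 * (a 0 : ℝ) * (a 3 : ℝ) + 4 * (a 1 : ℝ) * (a 3 : ℝ) + 6 * (a 2 : ℝ) * (a 3 : ℝ) + 4 * (a 3 : ℝ) ^ 2 - 5 * (a 4 : ℝ) - 4 * (a 0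 : ℝ) * (a 4 : ℝ) - 8 * (a 1 : ℝ) * (a 4 : ℝ) - 2 * (a 2 : ℝ) * (a 4 : ℝ) + 4 * (a 3 : ℝ) * (a 4 : ℝ)) = 0 := by
      apply Complex.ofReal_eq_zero.mp
      rw [← e8]; push_cast; ring
    clear e8
    have e9 := h 8
    rw [show p 8 = p9 from rfl] at e9
    simp only [p9, map_mul, map_add, map_sub, map_ofNat, eval_X, eval_C, map_pow, map_one] at e9
    have E9 : (a 3 : ℝ) * ((7/2 : ℝ) + (a 0 : ℝ) + (a 1 : ℝ) + (a 2 : ℝ) + (a 3 : ℝ) + (a 4 : ℝ)) * (15 - 5 * (a 0 : ℝ) + (a 1 : ℝ) - 4 * (a 0 : ℝ) * (a 1 : ℝ) - 4 * (a 1 : ℝ) ^ 2 + 23 * (a 2 : ℝ) - 8 * (a 0 : ℝ) * (a 2 : ℝ) + 4 * (a 1 : ℝ) * (a 2 : ℝ) + 8 * (a 2 : ℝ) ^ 2 + 21 * (a 3 : ℝ) - 2 * (a 0 : ℝ) * (a 3 : ℝ) + 6 * (a 1 : ℝ) * (a 3 : ℝ) + 14 * (a 2 : ℝ) * (a 3 :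 ℝ) + 6 * (a 3 : ℝ) ^ 2 + 15 * (a 4 : ℝ) + 4 * (a 0 : ℝ) * (a 4 : ℝ) + 8 * (a 1 : ℝ) * (a 4 : ℝ) + 12 * (a 2 : ℝ) * (a 4 : ℝ) + 6 * (a 3 : ℝ) * (a 4 : ℝ)) = 0 := by
      apply Complex.ofReal_eq_zero.mp
      rw [← e9]; push_cast; ring
    clear e9

    have h04 : a 0 = 0 ∨ a 4 = 0 := by
      by_contra hc
      push_neg at hc
      have hF : (0:ℝ) < (75 + 30 * (a 0 : ℝ) + 68 * (a 1 : ℝ) + 8 * (a 0 : ℝ) * (a 1 : ℝ) + 8 * (a 1 : ℝ) ^ 2 + 84 * (a 2 : ℝ) + 16 * (a 0 : ℝ) * (a 2 : ℝ) + 32 * (a 1 : ℝ) * (a 2 : ℝ) + 24 * (a 2 : ℝ) ^ 2 + 68 * (a 3 : ℝ) + 24 * (a 0 : ℝ) * (a 3 : ℝ) + 48 * (a 1 : ℝ) * (a 3 : ℝ) + 32 * (a 2 : ℝ) * (a 3 : ℝ) + 8 * (a 3 : ℝ) ^ 2 + 30 * (a 4 : ℝ) + 12 * (a 0 : ℝ)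 * (a 4 : ℝ) + 24 * (a 1 : ℝ) * (a 4 : ℝ) + 16 * (a 2 : ℝ) * (a 4 : ℝ) + 8 * (a 3 : ℝ) * (a 4 : ℝ)) := by positivity
      linarith [mul_pos (mul_pos (pos_of_ne _ hc.1) (pos_of_ne _ hc.2)) hF, E3]
    have h13 : a 1 = 0 ∨ a 3 = 0 := by
      by_contra hc
      push_neg at hc
      have hF : (0:ℝ) < (75 + 40 * (a 0 : ℝ) + 58 * (a 1 : ℝ) + 8 * (a 0 : ℝ) * (a 1 : ℝ) + 8 * (a 1 : ℝ) ^ 2 + 84 * (a 2 : ℝ) + 16 * (a 0 : ℝ) * (a 2 : ℝ) + 32 * (a 1 : ℝ) * (a 2 : ℝ) + 24 * (a 2 : ℝ) ^ 2 + 58 * (a 3 : ℝ) + 24 * (a 0 : ℝ) * (a 3 : ℝ) + 28 * (a 1 : ℝ) * (a 3 : ℝ) + 32 * (a 2 : ℝ) * (a 3 : ℝ) + 8 * (a 3 : ℝ) ^ 2 + 40 * (a 4 : ℝ) + 32 * (a 0 : ℝ) * (a 4 : ℝ) + 24 * (a 1 : ℝ) * (a 4 : ℝ) + 16 * (a 2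 : ℝ) * (a 4 : ℝ) + 8 * (a 3 : ℝ) * (a 4 : ℝ)) := by positivity
      linarith [mul_pos (mul_pos (pos_of_ne _ hc.1) (pos_of_ne _ hc.2)) hF, E4]
    have h14 : a 1 = 0 ∨ a 4 = 0 := by
      by_contra hc
      push_neg at hc
      obtain ⟨h1, h4⟩ := hc
      have ha0 := h04.resolve_right h4
      have ha3 := h13.resolve_left h1
      have hF : (0:ℝ) < (45 + 38 * (a 1 : ℝ) + 8 * (a 0 : ℝ) * (a 1 : ℝ) + 8 * (a 1 : ℝ) ^ 2 + 84 * (a 2 : ℝ) + 16 * (a 0 : ℝ) * (a 2 : ℝ) + 32 * (a 1 : ℝ) * (a 2 : ℝ) + 24 * (a 2 : ℝ) ^ 2 + 28 * (a 3 : ℝ) - 16 * (a 0 : ℝ) * (a 3 : ℝ) + 8 * (a 1 : ℝ) * (a 3 : ℝ) + 32 * (a 2 : ℝ) * (a 3 : ℝ) + 8 * (a 3 : ℝ) ^ 2 + 10 * (a 4 : ℝ) - 8 * (a 0 : ℝ) * (a 4 : ℝ) + 4 * (a 1 : ℝ) * (a 4 : ℝ) + 16 * (a 2 : ℝ) * (a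 4 : ℝ) + 8 * (a 3 : ℝ) * (a 4 : ℝ)) := by
        rw [castRz _ ha0, castRz _ ha3]; ring_nf; positivity
      linarith [mul_pos (mul_pos (pos_of_ne _ h1) (pos_of_ne _ h4)) hF, E5]
    have ha3 : a 3 = 0 := by
      by_contra h3
      have ha1 := h13.resolve_right h3
      by_cases ha0 : a 0 = 0
      · have hmid : (0:ℝ) < ((7/2 : ℝ) + (a 0 : ℝ) + (a 1 : ℝ) + (a 2 : ℝ) + (a 3 : ℝ) + (a 4 : ℝ)) := by positivity
        have hF : (0:ℝ) < (15 - 5 * (a 0 : ℝ) + (a 1 : ℝ) - 4 * (a 0 : ℝ) * (a 1 : ℝ) - 4 * (a 1 : ℝ) ^ 2 + 23 * (a 2 : ℝ) - 8 * (a 0 : ℝ) * (a 2 : ℝ) + 4 * (a 1 : ℝ) * (a 2 : ℝ) + 8 * (a 2 : ℝ) ^ 2 + 21 * (a 3 : ℝ) - 2 * (a 0 : ℝ) * (a 3 : ℝ) + 6 * (a 1 : ℝ) * (a 3 : ℝ) + 14 * (a 2 : ℝ) * (a 3 : ℝ) + 6 * (a 3 : ℝ) ^ 2 + 15 * (a 4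 : ℝ) + 4 * (a 0 : ℝ) * (a 4 : ℝ) + 8 * (a 1 : ℝ) * (a 4 : ℝ) + 12 * (a 2 : ℝ) * (a 4 : ℝ) + 6 * (a 3 : ℝ) * (a 4 : ℝ)) := by
          rw [castRz _ ha0, castRz _ ha1]; ring_nf; positivity
        linarith [mul_pos (mul_pos (pos_of_ne _ h3) hmid) hF, E9]
      · have ha4 := h04.resolve_left ha0
        have hF : (0:ℝ) < (45 + 10 * (a 0 : ℝ) + 28 * (a 1 : ℝ) + 8 * (a 0 : ℝ) * (a 1 : ℝ) + 8 * (a 1 : ℝ) ^ 2 + 84 * (a 2 : ℝ) + 16 * (a 0 : ℝ) * (a 2 : ℝ) + 32 * (a 1 : ℝ) * (a 2 : ℝ) + 24 * (a 2 : ℝ) ^ 2 + 38 * (a 3 : ℝ) + 4 * (a 0 : ℝ) * (a 3 : ℝ) + 8 * (a 1 : ℝ) * (a 3 : ℝ) + 32 * (a 2 : ℝ) * (a 3 : ℝ) + 8 * (a 3 : ℝ) ^ 2 - 8 * (a 0 : ℝ) * (a 4 : ℝ) - 16 * (a 1 : ℝ) * (a 4 : ℝ) + 16 * (a 2 : ℝ)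 * (a 4 : ℝ) + 8 * (a 3 : ℝ) * (a 4 : ℝ)) := by
          rw [castRz _ ha1, castRz _ ha4]; ring_nf; positivity
        linarith [mul_pos (mul_pos (pos_of_ne _ ha0) (pos_of_ne _ h3)) hF, E2]
    have h24 : a 2 = 0 ∨ a 4 = 0 := by
      by_contra hc
      push_neg at hc
      obtain ⟨h2, h4⟩ := hc
      have ha0 := h04.resolve_right h4
      have ha1 := h14.resolve_right h4
      have hF : (0:ℝ) < (65 + 40 * (a 0 : ℝ) + 112 * (a 1 : ℝ) + 32 * (a 0 : ℝ) * (a 1 : ℝ) + 32 * (a 1 : ℝ) ^ 2 + 66 * (a 2 : ℝ) + 24 * (a 0 : ℝ) * (a 2 : ℝ) + 48 * (a 1 : ℝ) * (a 2 : ℝ) + 16 * (a 2 : ℝ) ^ 2 + 12 * (a 3 : ℝ) + 16 * (a 0 : ℝ) * (a 3 : ℝ) + 32 * (a 1 : ℝ) * (a 3 : ℝ) + 8 * (a 2 : ℝ) * (a 3 : ℝ) - 8 * (a 3 : ℝ) ^ 2 + 10 * (a 4 : ℝ) + 8 * (a 0 : ℝ) * (a 4 : ℝ) + 16 * (a 1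 : ℝ) * (a 4 : ℝ) + 4 * (a 2 : ℝ) * (a 4 : ℝ) - 8 * (a 3 : ℝ) * (a 4 : ℝ)) := by
        rw [castRz _ ha0, castRz _ ha1, castRz _ ha3]; ring_nf; positivity
      linarith [mul_pos (mul_pos (pos_of_ne _ h2) (pos_of_ne _ h4)) hF, E6]
    have ha2 : a 2 = 0 := by
      by_contra h2
      have ha4 := h24.resolve_left h2
      have ha1 : a 1 = 0 := by
        by_contra h1
        have hmid : (0:ℝ) < ((7/2 : ℝ) + (a 0 : ℝ) + (a 1 : ℝ) + (a 2 : ℝ) + (a 3 : ℝ) + (a 4 : ℝ)) := by positivity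
        have hF : (0:ℝ) < (15 + 15 * (a 0 : ℝ) + 21 * (a 1 : ℝ) + 6 * (a 0 : ℝ) * (a 1 : ℝ) + 6 * (a 1 : ℝ) ^ 2 + 23 * (a 2 : ℝ) + 12 * (a 0 : ℝ) * (a 2 : ℝ) + 14 * (a 1 : ℝ) * (a 2 : ℝ) + 8 * (a 2 : ℝ) ^ 2 + (a 3 : ℝ) + 8 * (a 0 : ℝ) * (a 3 : ℝ) + 6 * (a 1 : ℝ) * (a 3 : ℝ) + 4 * (a 2 : ℝ) * (a 3 : ℝ) - 4 * (a 3 : ℝ) ^ 2 - 5 * (a 4 : ℝ) + 4 * (a 0 : ℝ) * (a 4 : ℝ) - 2 * (a 1 : ℝ) * (a 4 : ℝ) - 8 * (a 2 : ℝ) * (a 4 : ℝ) - 4 * (a 3 : ℝ) * (a 4 : ℝ)) := by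
          rw [castRz _ ha3, castRz _ ha4]; ring_nf; positivity
        linarith [mul_pos (mul_pos (pos_of_ne _ h1) hmid) hF, E7]
      have ha0 : a 0 = 0 := by
        by_contra h0
        have hF : (0:ℝ) < (65 + 10 * (a 0 : ℝ) + 12 * (a 1 : ℝ) - 8 * (a 0 : ℝ) * (a 1 : ℝ) - 8 * (a 1 : ℝ) ^ 2 + 66 * (a 2 : ℝ) + 4 * (a 0 : ℝ) * (a 2 : ℝ) + 8 * (a 1 : ℝ) * (a 2 : ℝ) + 16 * (a 2 : ℝ) ^ 2 + 112 * (a 3 : ℝ) + 16 * (a 0 : ℝ) * (a 3 : ℝ) + 32 * (a 1 : ℝ) * (a 3 : ℝ) + 48 * (a 2 : ℝ) * (a 3 : ℝ) + 32 * (a 3 : ℝ) ^ 2 + 40 * (a 4 : ℝ) + 8 * (a 0 : ℝ) * (a 4 : ℝ) + 16 * (a 1 : ℝ) * (a 4 : ℝ) + 24 * (a 2 : ℝ) * (a 4 : ℝ) + 32 * (a 3 : ℝ) * (a 4 : ℝ)) := by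
          rw [castRz _ ha1, castRz _ ha3, castRz _ ha4]; ring_nf; positivity
        linarith [mul_pos (mul_pos (pos_of_ne _ h0) (pos_of_ne _ h2)) hF, E1]
      have hmid : (0:ℝ) < ((7/2 : ℝ) + (a 0 : ℝ) + (a 1 : ℝ) + (a 2 : ℝ) + (a 3 : ℝ) + (a 4 : ℝ)) := by positivity
      have hF : (0:ℝ) < (5 - 5 * (a 0 : ℝ) + 9 * (a 1 : ℝ) + 4 * (a 0 : ℝ) * (a 1 : ℝ) + 4 * (a 1 : ℝ) ^ 2 + 7 * (a 2 : ℝ) - 2 * (a 0 : ℝ) * (a 2 : ℝ) + 6 * (a 1 : ℝ) * (a 2 : ℝ) + 2 * (a 2 : ℝ) ^ 2 + 9 * (a 3 : ℝ) - 8 * (a 0 : ℝ) * (a 3 : ℝ) + 4 * (a 1 : ℝ) * (a 3 : ℝ) + 6 * (a 2 : ℝ) * (a 3 : ℝ) + 4 * (a 3 : ℝ) ^ 2 - 5 * (a 4 : ℝ) - 4 * (a 0 : ℝ) * (a 4 : ℝ) - 8 * (a 1 : ℝ) * (a 4 : ℝ) - 2 * (a 2 : ℝ) * (a 4 : ℝ)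 + 4 * (a 3 : ℝ) * (a 4 : ℝ)) := by
        rw [castRz _ ha0, castRz _ ha1, castRz _ ha3, castRz _ ha4]; ring_nf; positivity
      linarith [mul_pos (mul_pos (pos_of_ne _ h2) hmid) hF, E8]
    have ha1 : a 1 = 0 := by
      by_contra h1
      have ha4 := h14.resolve_left h1
      have hmid : (0:ℝ) < ((7/2 : ℝ) + (a 0 : ℝ) + (a 1 : ℝ) + (a 2 : ℝ) + (a 3 : ℝ) + (a 4 : ℝ)) := by positivity
      have hF : (0:ℝ) < (15 + 15 * (a 0 : ℝ) + 21 * (a 1 : ℝ) + 6 * (a 0 : ℝ) * (a 1 : ℝ) + 6 * (a 1 : ℝ) ^ 2 + 23 * (a 2 : ℝ) + 12 * (a 0 : ℝ) * (a 2 : ℝ) + 14 * (a 1 : ℝ) * (a 2 : ℝ) + 8 * (a 2 : ℝ) ^ 2 + (a 3 : ℝ) + 8 * (a 0 : ℝ) * (a 3 : ℝ) + 6 * (a 1 : ℝ) * (a 3 : ℝ) + 4 * (a 2 : ℝ) * (a 3 : ℝ) - 4 * (a 3 : ℝ) ^ 2 - 5 * (a 4 : ℝ) + 4 * (a 0 :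 ℝ) * (a 4 : ℝ) - 2 * (a 1 : ℝ) * (a 4 : ℝ) - 8 * (a 2 : ℝ) * (a 4 : ℝ) - 4 * (a 3 : ℝ) * (a 4 : ℝ)) := by
        rw [castRz _ ha2, castRz _ ha3, castRz _ ha4]; ring_nf; positivity
      linarith [mul_pos (mul_pos (pos_of_ne _ h1) hmid) hF, E7]
    rcases h04 with ha0 | ha4
    · exact Or.inr ⟨ha0, ha1, ha2, ha3⟩
    · exact Or.inl ⟨ha1, ha2, ha3, ha4⟩
  · rintro (⟨h1, h2, h3, h4⟩ | ⟨h0, h1, h2, h3⟩) i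
    · fin_cases i
      · show MvPolynomial.eval (fun j => (a j : ℂ)) p1 = 0
        simp [p1, h1, h2, h3, h4]
      · show MvPolynomial.eval (fun j => (a j : ℂ)) p2 = 0
        simp [p2, h1, h2, h3, h4]
      · show MvPolynomial.eval (fun j => (a j : ℂ)) p3 = 0
        simp [p3, h1, h2, h3, h4]
      · show MvPolynomial.eval (fun j => (a j : ℂ)) p4 = 0
        simp [p4, h1, h2, h3, h4]
      · show MvPolynomial.eval (fun j => (a j : ℂ)) p5 = 0
        simp [p5, h1, h2, h3, h4]
      · show MvPolynomial.eval (fun j => (a j : ℂ)) p6 = 0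
        simp [p6, h1, h2, h3, h4]
      · show MvPolynomial.eval (fun j => (a j : ℂ)) p7 = 0
        simp [p7, h1, h2, h3, h4]
      · show MvPolynomial.eval (fun j => (a j : ℂ)) p8 = 0
        simp [p8, h1, h2, h3, h4]
      · show MvPolynomial.eval (fun j => (a j : ℂ)) p9 = 0
        simp [p9, h1, h2, h3, h4]
    · fin_cases i
      · show MvPolynomial.eval (fun j => (a j : ℂ)) p1 = 0
        simp [p1, h0, h1, h2, h3]
      · show MvPolynomial.eval (fun j => (a j : ℂ)) p2 = 0
        simp [p2, h0, h1, h2, h3]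
      · show MvPolynomial.eval (fun j => (a j : ℂ)) p3 = 0
        simp [p3, h0, h1, h2, h3]
      · show MvPolynomial.eval (fun j => (a j : ℂ)) p4 = 0
        simp [p4, h0, h1, h2, h3]
      · show MvPolynomial.eval (fun j => (a j : ℂ)) p5 = 0
        simp [p5, h0, h1, h2, h3]
      · show MvPolynomial.eval (fun j => (a j : ℂ)) p6 = 0
        simp [p6, h0, h1, h2, h3]
      · show MvPolynomial.eval (fun j => (a j : ℂ)) p7 = 0
        simp [p7, h0, h1, h2, h3]
      · show MvPolynomial.eval (fun j => (a j : ℂ)) p8 = 0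
        simp [p8, h0, h1, h2, h3]
      · show MvPolynomial.eval (fun j => (a j : ℂ)) p9 = 0
        simp [p9, h0, h1, h2, h3]
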